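/- arXiv:1212.0791 — 6 statements merged into one kernel-verified Lean document; each statement's English description precedes it below -/
import Mathlib

section
/- Suppose H and L satisfy the Hodge-Riemann bilinear relations (in particular hard Lefschetz). Let V ⊆ H be an L-stable graded subspace with dim V^i = dim V^{-i} for all i. Then V with the restricted form and restricted operator L satisfies the Hodge-Riemann bilinear relations. -/
/-!
The primitive subspaces of `S` lie in those of `H`, so the definiteness of the Lefschetz forms
restricts. For hard Lefschetz, `L^i` is injective on `S^{-i} ⊆ H^{-i}` and maps it into `S^i`,
which has the same dimension, so it is onto.
-/

theorem Module.End.pow_apply_mem_add_nsmul {R M ι : Type*} [Semiring R] [AddCommMonoid M]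
    [Module R M] [AddMonoid ι] {p : ι → Submodule R M} {L : Module.End R M} {d : ι}
    (hL : ∀ i, ∀ x ∈ p i, L x ∈ p (i + d)) (k : ℕ) {i : ι} {x : M} (hx : x ∈ p i) :
    (L ^ k) x ∈ p (i + k • d) := by
  induction k with
  | zero => simpa using hx
  | succ k ih =>
    rw [pow_succ', Module.End.mul_apply, succ_nsmul, ← add_assoc]
    exact hL _ _ ih

theorem LinearMap.surjOn_of_injOn_of_finrank_eq {K V W : Type*} [DivisionRing K]
    [AddCommGroup V] [Module K V] [AddCommGroup W] [Module K W] {f : V →ₗ[K] W}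
    {A : Submodule K V} {C : Submodule K W} [FiniteDimensional K A] [FiniteDimensional K C]
    (hmaps : Set.MapsTo f A C) (hinj : Set.InjOn f A)
    (hrank : Module.finrank K A = Module.finrank K C) : Set.SurjOn f A C := by
  rw [← hmaps.restrict_surjective_iff]
  refine (LinearMap.injective_iff_surjective_of_finrank_eq_finrank hrank
    (f := f.restrict hmaps)).mp fun a b hab => ?_
  exact Subtype.ext (hinj a.2 b.2 (congrArg Subtype.val hab))

theorem hodgeRiemann_subspace_general
    (V : Type) [AddCommGroup V] [Module ℝ V] [FiniteDimensional ℝ V]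
    (p : ℤ → Submodule ℝ V)
    (B : V →ₗ[ℝ] V →ₗ[ℝ] ℝ)
    (L : Module.End ℝ V)
    (hdeg : ∀ i : ℤ, ∀ x ∈ p i, L x ∈ p (i + 2))
    -- `H` is even or odd, with parity `j ∈ {0,1}`:
    (j : ℕ)
    -- hard Lefschetz for `H`:
    (hHL : ∀ i : ℕ,
      (∀ x ∈ p (-(i : ℤ)), (L ^ i) x = 0 → x = 0) ∧
      (∀ y ∈ p (i : ℤ), ∃ x ∈ p (-(i : ℤ)), (L ^ i) x = y))
    -- the Hodge-Riemann bilinear relations for `H`: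
    (hHR : ∃ ε : ℝ, (ε = 1 ∨ ε = -1) ∧ ∀ i : ℕ,
      ∀ x ∈ p (-(i : ℤ)) ⊓ LinearMap.ker (L ^ (i + 1)), x ≠ 0 →
        0 < ε * (-1 : ℝ) ^ (((j : ℤ) - (i : ℤ)) / 2) * B x ((L ^ i) x))
    -- an `L`-stable graded subspace with symmetric graded dimensions:
    (S : Submodule ℝ V)
    (hstable : ∀ x ∈ S, L x ∈ S)
    (hdim : ∀ i : ℤ, Module.finrank ℝ ↥(S ⊓ p i) = Module.finrank ℝ ↥(S ⊓ p (-i))) :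
    -- hard Lefschetz for `S`:
    (∀ i : ℕ,
      (∀ x ∈ S ⊓ p (-(i : ℤ)), (L ^ i) x = 0 → x = 0) ∧
      (∀ y ∈ S ⊓ p (i : ℤ), ∃ x ∈ S ⊓ p (-(i : ℤ)), (L ^ i) x = y)) ∧
    -- the Hodge-Riemann bilinear relations for `S` with the restricted form:
    (∃ ε : ℝ, (ε = 1 ∨ ε = -1) ∧ ∀ i : ℕ,
      ∀ x ∈ S ⊓ p (-(i : ℤ)) ⊓ LinearMap.ker (L ^ (i + 1)), x ≠ 0 →
        0 < ε * (-1 : ℝ) ^ (((j : ℤ) - (i : ℤ)) / 2) * B x ((L ^ i) x)) := by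
  refine ⟨fun i => ⟨fun x hx => (hHL i).1 x hx.2, fun y hy => ?_⟩, ?_⟩
  · have hmaps : Set.MapsTo (L ^ i) (S ⊓ p (-(i : ℤ)) : Submodule ℝ V) (S ⊓ p i) := by
      intro x ⟨hxS, hxp⟩
      refine ⟨Module.End.pow_apply_mem_of_forall_mem i hstable x hxS, ?_⟩
      have hshift := Module.End.pow_apply_mem_add_nsmul hdeg i hxp
      rwa [show -(i : ℤ) + i • 2 = i by rw [nsmul_eq_mul]; ring] at hshift
    have hinj : Set.InjOn (L ^ i) (S ⊓ p (-(i : ℤ)) : Submodule ℝ V) :=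
      LinearMap.injOn_of_disjoint_ker inf_le_right (LinearMap.disjoint_ker.mpr (hHL i).1)
    have hrank := neg_neg (i : ℤ) ▸ hdim (-(i : ℤ))
    exact LinearMap.surjOn_of_injOn_of_finrank_eq hmaps hinj hrank hy
  · obtain ⟨ε, hε, hpos⟩ := hHR
    exact ⟨ε, hε, fun i x hx => hpos i x ⟨hx.1.2, hx.2⟩⟩

/-- **Hodge–Riemann relations pass to Lefschetz-stable subspaces.** Suppose `H` (even or
odd, with parity `j`) and `L` satisfy the Hodge–Riemann bilinear relations: there is
`ε = ±1` such that the Lefschetz form `⟨h, L^i h'⟩` is `ε(-1)^{(-i+j)/2}`-definite on each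
primitive subspace `P_L^{-i} = ker L^{i+1} ∩ H^{-i}`.  Let `V ⊆ H` be an `L`-stable graded
subspace with `dim V^i = dim V^{-i}`.  Then `V`, with the restricted form and operator,
satisfies hard Lefschetz and the Hodge–Riemann bilinear relations. -/
theorem hodgeRiemann_subspace
    (V : Type) [AddCommGroup V] [Module ℝ V] [FiniteDimensional ℝ V]
    (p : ℤ → Submodule ℝ V) (hp : DirectSum.IsInternal p)
    (B : V →ₗ[ℝ] V →ₗ[ℝ] ℝ)
    (hsymm : ∀ x y : V, B x y = B y x)
    (hgraded : ∀ i j : ℤ, i + j ≠ 0 → ∀ x ∈ p i, ∀ y ∈ p j, B x y = 0)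
    (hnd : ∀ x : V, (∀ y : V, B x y = 0) → x = 0)
    (L : Module.End ℝ V)
    (hdeg : ∀ i : ℤ, ∀ x ∈ p i, L x ∈ p (i + 2))
    (hadj : ∀ x y : V, B (L x) y = B x (L y))
    -- `H` is even or odd, with parity `j ∈ {0,1}`:
    (j : ℕ)
    (hparity : (j = 0 ∧ ∀ i : ℤ, Odd i → p i = ⊥) ∨ (j = 1 ∧ ∀ i : ℤ, Even i → p i = ⊥))
    -- hard Lefschetz for `H`:
    (hHL : ∀ i : ℕ,
      (∀ x ∈ p (-(i : ℤ)), (L ^ i) x = 0 → x = 0) ∧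
      (∀ y ∈ p (i : ℤ), ∃ x ∈ p (-(i : ℤ)), (L ^ i) x = y))
    -- the Hodge-Riemann bilinear relations for `H`:
    (hHR : ∃ ε : ℝ, (ε = 1 ∨ ε = -1) ∧ ∀ i : ℕ,
      ∀ x ∈ p (-(i : ℤ)) ⊓ LinearMap.ker (L ^ (i + 1)), x ≠ 0 →
        0 < ε * (-1 : ℝ) ^ (((j : ℤ) - (i : ℤ)) / 2) * B x ((L ^ i) x))
    -- an `L`-stable graded subspace with symmetric graded dimensions:
    (S : Submodule ℝ V)
    (hstable : ∀ x ∈ S, L x ∈ S)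
    (hgr : S = ⨆ i : ℤ, S ⊓ p i)
    (hdim : ∀ i : ℤ, Module.finrank ℝ ↥(S ⊓ p i) = Module.finrank ℝ ↥(S ⊓ p (-i))) :
    -- hard Lefschetz for `S`:
    (∀ i : ℕ,
      (∀ x ∈ S ⊓ p (-(i : ℤ)), (L ^ i) x = 0 → x = 0) ∧
      (∀ y ∈ S ⊓ p (i : ℤ), ∃ x ∈ S ⊓ p (-(i : ℤ)), (L ^ i) x = y)) ∧
    -- the Hodge-Riemann bilinear relations for `S` with the restricted form:
    (∃ ε : ℝ, (ε = 1 ∨ ε = -1) ∧ ∀ i : ℕ,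
      ∀ x ∈ S ⊓ p (-(i : ℤ)) ⊓ LinearMap.ker (L ^ (i + 1)), x ≠ 0 →
        0 < ε * (-1 : ℝ) ^ (((j : ℤ) - (i : ℤ)) / 2) * B x ((L ^ i) x)) :=
  hodgeRiemann_subspace_general V p B L hdeg j hHL hHR S hstable hdim
end

section
/- (Weak Lefschetz substitute) Let φ : V → W(1) be a map of graded ℝ[L]-modules (deg L = 2, V and W graded finite-dimensional real vector spaces) such that: (1) φ is injective in degrees ≤ -1; (2) V and W carry graded bilinear forms with ⟨φ(α), φ(β)⟩_W = ⟨α, Lβ⟩_V for all α, β ∈ V; (3) W (with its form and L) satisfies the Hodge-Riemann bilinear relations. Then L^i : V^{-i} → V^i is injective for all i ≥ 0. -/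
/-!
For `x ∈ V^{-i}` with `L^i x = 0` and `i ≥ 1`, the image `φ x` lies in `W^{-(i-1)}` and is killed by
`L^i`, so it is primitive. Its Lefschetz form is `⟨φ x, L^{i-1} φ x⟩_W = ⟨x, L^i x⟩_V = 0`, and
definiteness on primitive vectors forces `φ x = 0`; injectivity of `φ` in negative degrees gives `x = 0`.
-/

section WeakLefschetz

variable {R V W : Type*}

theorem LinearMap.map_pow_apply_of_map_apply [Semiring R] [AddCommMonoid V] [Module R V]
    [AddCommMonoid W] [Module R W] {φ : V →ₗ[R] W} {LV : Module.End R V} {LW : Module.End R W}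
    (hφL : ∀ x : V, φ (LV x) = LW (φ x)) (n : ℕ) (x : V) :
    φ ((LV ^ n) x) = (LW ^ n) (φ x) :=
  (LinearMap.ext_iff.mp (Module.End.commute_pow_left_of_commute (LinearMap.ext hφL).symm n) x).symm

theorem lefschetz_form_map_eq [CommSemiring R] [AddCommMonoid V] [Module R V]
    [AddCommMonoid W] [Module R W] {φ : V →ₗ[R] W} {LV : Module.End R V} {LW : Module.End R W}
    {BV : V →ₗ[R] V →ₗ[R] R} {BW : W →ₗ[R] W →ₗ[R] R}
    (hφL : ∀ x : V, φ (LV x) = LW (φ x)) (hforms : ∀ α β : V, BW (φ α) (φ β) = BV α (LV β))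
    (n : ℕ) (x : V) :
    BW (φ x) ((LW ^ n) (φ x)) = BV x ((LV ^ (n + 1)) x) := by
  rw [← LinearMap.map_pow_apply_of_map_apply hφL, hforms, pow_succ', Module.End.mul_apply]

theorem eq_zero_of_primitive_of_lefschetz_form_eq_zero [AddCommGroup W] [Module ℝ W]
    {pW : ℤ → Submodule ℝ W} {LW : Module.End ℝ W} {BW : W →ₗ[ℝ] W →ₗ[ℝ] ℝ} (s : ℕ → ℝ)
    (hHR : ∀ i : ℕ, ∀ x ∈ pW (-(i : ℤ)) ⊓ LinearMap.ker (LW ^ (i + 1)), x ≠ 0 →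
      0 < s i * BW x ((LW ^ i) x))
    {i : ℕ} {x : W} (hx : x ∈ pW (-(i : ℤ))) (hprim : (LW ^ (i + 1)) x = 0)
    (hB : BW x ((LW ^ i) x) = 0) : x = 0 := by
  by_contra hx0
  simpa [hB] using hHR i x ⟨hx, hprim⟩ hx0

end WeakLefschetz

theorem weak_lefschetz_substitute_general
    (V : Type) [AddCommGroup V] [Module ℝ V]
    (W : Type) [AddCommGroup W] [Module ℝ W]
    (pV : ℤ → Submodule ℝ V)
    (pW : ℤ → Submodule ℝ W)
    (LV : Module.End ℝ V)
    (LW : Module.End ℝ W)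
    (BV : V →ₗ[ℝ] V →ₗ[ℝ] ℝ)
    (BW : W →ₗ[ℝ] W →ₗ[ℝ] ℝ)
    -- `φ : V → W(1)` is a map of graded `ℝ[L]`-modules:
    (φ : V →ₗ[ℝ] W)
    (hφdeg : ∀ i : ℤ, ∀ x ∈ pV i, φ x ∈ pW (i + 1))
    (hφL : ∀ x : V, φ (LV x) = LW (φ x))
    -- (1) `φ` is injective in degrees `≤ -1`:
    (hφinj : ∀ i : ℤ, i ≤ -1 → ∀ x ∈ pV i, φ x = 0 → x = 0)
    -- (2) compatibility of the forms:
    (hforms : ∀ α β : V, BW (φ α) (φ β) = BV α (LV β))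
    -- (3) `W` satisfies the Hodge-Riemann bilinear relations:
    (jW : ℕ)
    (hHRW : ∃ ε : ℝ, (ε = 1 ∨ ε = -1) ∧ ∀ i : ℕ,
      ∀ x ∈ pW (-(i : ℤ)) ⊓ LinearMap.ker (LW ^ (i + 1)), x ≠ 0 →
        0 < ε * (-1 : ℝ) ^ (((jW : ℤ) - (i : ℤ)) / 2) * BW x ((LW ^ i) x)) :
    ∀ i : ℕ, ∀ x ∈ pV (-(i : ℤ)), (LV ^ i) x = 0 → x = 0 := by
  obtain ⟨ε, -, hHR⟩ := hHRW
  rintro (_ | n) x hx hLx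
  · simpa using hLx
  have hφx : φ x ∈ pW (-(n : ℤ)) := by
    simpa [show -((n + 1 : ℕ) : ℤ) + 1 = -(n : ℤ) by omega] using hφdeg _ x hx
  have hprim : (LW ^ (n + 1)) (φ x) = 0 := by
    rw [← LinearMap.map_pow_apply_of_map_apply hφL, hLx, map_zero]
  have hB : BW (φ x) ((LW ^ n) (φ x)) = 0 := by
    rw [lefschetz_form_map_eq hφL hforms, hLx, map_zero]
  exact hφinj _ (by omega) x hx
    (eq_zero_of_primitive_of_lefschetz_form_eq_zero _ hHR hφx hprim hB)

/-- **Weak Lefschetz substitute.** Let `φ : V → W(1)` be a map of graded `ℝ[L]`-modules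
(`deg L = 2`) between graded finite-dimensional real vector spaces such that:
(1) `φ` is injective in degrees `≤ -1`;
(2) `V` and `W` carry graded bilinear forms with `⟨φ α, φ β⟩_W = ⟨α, L β⟩_V`;
(3) `W` (with its form and `L`) satisfies the Hodge–Riemann bilinear relations
    (`W` even or odd, hard Lefschetz, and the Lefschetz forms on the primitive
    subspaces alternately definite with a consistent global sign).
Then `L^i : V^{-i} → V^i` is injective for all `i ≥ 0`. -/
theorem weak_lefschetz_substitute
    (V : Type) [AddCommGroup V] [Module ℝ V] [FiniteDimensional ℝ V]
    (W : Type) [AddCommGroup W] [Module ℝ W] [FiniteDimensional ℝ W]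
    (pV : ℤ → Submodule ℝ V) (hpV : DirectSum.IsInternal pV)
    (pW : ℤ → Submodule ℝ W) (hpW : DirectSum.IsInternal pW)
    (LV : Module.End ℝ V) (hdegV : ∀ i : ℤ, ∀ x ∈ pV i, LV x ∈ pV (i + 2))
    (LW : Module.End ℝ W) (hdegW : ∀ i : ℤ, ∀ x ∈ pW i, LW x ∈ pW (i + 2))
    (BV : V →ₗ[ℝ] V →ₗ[ℝ] ℝ)
    (hgrV : ∀ i j : ℤ, i + j ≠ 0 → ∀ x ∈ pV i, ∀ y ∈ pV j, BV x y = 0)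
    (BW : W →ₗ[ℝ] W →ₗ[ℝ] ℝ)
    (hsymmW : ∀ x y : W, BW x y = BW y x)
    (hgrW : ∀ i j : ℤ, i + j ≠ 0 → ∀ x ∈ pW i, ∀ y ∈ pW j, BW x y = 0)
    -- `φ : V → W(1)` is a map of graded `ℝ[L]`-modules:
    (φ : V →ₗ[ℝ] W)
    (hφdeg : ∀ i : ℤ, ∀ x ∈ pV i, φ x ∈ pW (i + 1))
    (hφL : ∀ x : V, φ (LV x) = LW (φ x))
    -- (1) `φ` is injective in degrees `≤ -1`:
    (hφinj : ∀ i : ℤ, i ≤ -1 → ∀ x ∈ pV i, φ x = 0 → x = 0)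
    -- (2) compatibility of the forms:
    (hforms : ∀ α β : V, BW (φ α) (φ β) = BV α (LV β))
    -- (3) `W` satisfies the Hodge-Riemann bilinear relations:
    (jW : ℕ)
    (hparityW : (jW = 0 ∧ ∀ i : ℤ, Odd i → pW i = ⊥) ∨
      (jW = 1 ∧ ∀ i : ℤ, Even i → pW i = ⊥))
    (hHLW : ∀ i : ℕ,
      (∀ x ∈ pW (-(i : ℤ)), (LW ^ i) x = 0 → x = 0) ∧
      (∀ y ∈ pW (i : ℤ), ∃ x ∈ pW (-(i : ℤ)), (LW ^ i) x = y))
    (hHRW : ∃ ε : ℝ, (ε = 1 ∨ ε = -1) ∧ ∀ i : ℕ,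
      ∀ x ∈ pW (-(i : ℤ)) ⊓ LinearMap.ker (LW ^ (i + 1)), x ≠ 0 →
        0 < ε * (-1 : ℝ) ^ (((jW : ℤ) - (i : ℤ)) / 2) * BW x ((LW ^ i) x)) :
    ∀ i : ℕ, ∀ x ∈ pV (-(i : ℤ)), (LV ^ i) x = 0 → x = 0 :=
  weak_lefschetz_substitute_general V W pV pW LV LW BV BW φ hφdeg hφL hφinj hforms jW hHRW
end

section
/- Let H be a graded finite-dimensional real vector space with a graded symmetric bilinear form ⟨-,-⟩ (not necessarily non-degenerate) and a self-adjoint degree-2 operator L. Suppose there is an integer d > 0 such that L^i : H^{-d-i} → H^{-d+i} is an isomorphism for all i ≥ 0. Then for all i ≥ 0 the Lefschetz form (h, h')_L^{-i} := ⟨h, L^i h'⟩ on H^{-i} is identically zero. -/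
/-!
Call a class `x ∈ H^{-d-j}` (`j ≥ 0`) primitive if `L^{j+1} x = 0`. Surjectivity of
`L^{j+2} : H^{-d-j-2} → H^{-d+j+2}` splits every `x ∈ H^{-d-j}` as a primitive class plus
`L x₁` with `x₁ ∈ H^{-d-j-2}`, while every `z ∈ H^{d+j}` is `L^{2d+j} y`. Since `2d + j > j`,
the primitive part pairs to zero with `z`, and `⟨L x₁, z⟩ = ⟨x₁, L z⟩` is a pairing of the same
shape two degrees lower. The grading is bounded below, so by descending induction
`⟨H^{-d-j}, H^{d+j}⟩ = 0` for all `j ≥ 0`. The Lefschetz form on `H^{-i}` is such a pairing when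
`i ≥ d`, and when `i < d` it becomes one after writing `H^{-i} = L^{d-i} H^{-2d+i}`.
-/

theorem LinearMap.IsAdjointPair.pow {R M N : Type*} [CommSemiring R] [AddCommMonoid M]
    [Module R M] [AddCommMonoid N] [Module R N] {B : M →ₗ[R] M →ₗ[R] N} {f : Module.End R M}
    (h : LinearMap.IsAdjointPair B B f f) (n : ℕ) :
    LinearMap.IsAdjointPair B B ⇑(f ^ n) ⇑(f ^ n) := by
  induction n with
  | zero => exact LinearMap.isAdjointPair_one
  | succ n ih =>
    have h' := ih.mul h
    rwa [← pow_succ, ← pow_succ'] at h'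

theorem exists_forall_lt_eq_bot_of_iSupIndep {α : Type*} [CompleteLattice α] [WellFoundedGT α]
    {p : ℤ → α} (hp : iSupIndep p) : ∃ M, ∀ t < M, p t = ⊥ := by
  obtain ⟨M, hM⟩ := (WellFoundedGT.finite_ne_bot_of_iSupIndep hp).bddBelow
  exact ⟨M, fun t ht => by_contra fun h => (hM h).not_gt ht⟩

section Graded

variable {R V N : Type*} [CommRing R] [AddCommGroup V] [Module R V] [AddCommGroup N] [Module R N]
  {p : ℤ → Submodule R V} {L : Module.End R V} {B : V →ₗ[R] V →ₗ[R] N} {d : ℤ}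

theorem pow_apply_mem_add_two_mul (hdeg : ∀ i : ℤ, ∀ x ∈ p i, L x ∈ p (i + 2)) (n : ℕ)
    {t : ℤ} {x : V} (hx : x ∈ p t) : (L ^ n) x ∈ p (t + 2 * n) := by
  induction n with
  | zero => simpa using hx
  | succ n ih =>
    rw [pow_succ', Module.End.mul_apply]
    convert hdeg _ _ ih using 2
    push_cast
    ring

theorem exists_mem_pow_succ_apply_sub_eq_zero (hdeg : ∀ i : ℤ, ∀ x ∈ p i, L x ∈ p (i + 2))
    (hsurj : ∀ i : ℕ, ∀ y ∈ p (-d + i), ∃ x ∈ p (-d - i), (L ^ i) x = y)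
    (j : ℕ) {x : V} (hx : x ∈ p (-d - j)) :
    ∃ x₁ ∈ p (-d - ↑(j + 2)), (L ^ (j + 1)) (x - L x₁) = 0 := by
  obtain ⟨x₁, hx₁, hLx₁⟩ := hsurj (j + 2) ((L ^ (j + 1)) x) <| by
    convert pow_apply_mem_add_two_mul hdeg (j + 1) hx using 2
    push_cast
    ring
  refine ⟨x₁, hx₁, ?_⟩
  rw [map_sub, ← Module.End.mul_apply, ← pow_succ, hLx₁, sub_self]

theorem apply_eq_zero_of_mem_neg_sub_of_mem_add (hdeg : ∀ i : ℤ, ∀ x ∈ p i, L x ∈ p (i + 2))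
    (hadj : LinearMap.IsAdjointPair B B L L) (hd : 0 < d)
    (hsurj : ∀ i : ℕ, ∀ y ∈ p (-d + i), ∃ x ∈ p (-d - i), (L ^ i) x = y)
    (hbot : ∃ M, ∀ t < M, p t = ⊥) (j : ℕ) :
    ∀ x ∈ p (-d - j), ∀ z ∈ p (d + j), B x z = 0 := by
  induction j using Nat.strong_decreasing_induction with
  | base =>
    obtain ⟨M, hM⟩ := hbot
    refine ⟨(-d - M).toNat, fun j hj x hx z _ => ?_⟩
    rw [hM _ (by omega), Submodule.mem_bot] at hx
    rw [hx, map_zero, LinearMap.zero_apply]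
  | step j ih =>
    intro x hx z hz
    obtain ⟨x₁, hx₁, hprim⟩ := exists_mem_pow_succ_apply_sub_eq_zero hdeg hsurj j hx
    obtain ⟨n, hn⟩ : ∃ n : ℕ, (n : ℤ) = 2 * d + j := ⟨_, Int.toNat_of_nonneg (by omega)⟩
    obtain ⟨y, -, rfl⟩ := hsurj n z (by convert hz using 2; omega)
    have primitive_part : B (x - L x₁) ((L ^ n) y) = 0 := by
      rw [← hadj.pow n, Module.End.pow_map_zero_of_le (by omega) hprim, map_zero,
        LinearMap.zero_apply]
    have lefschetz_part : B (L x₁) ((L ^ n) y) = 0 := by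
      rw [hadj]
      refine ih (j + 2) (by omega) x₁ hx₁ _ ?_
      convert hdeg _ _ hz using 2
      push_cast
      ring
    rw [← sub_add_cancel x (L x₁), map_add, LinearMap.add_apply, primitive_part, lefschetz_part,
      add_zero]

end Graded

theorem shifted_lefschetz_form_vanishes_general
    (V : Type) [AddCommGroup V] [Module ℝ V] [FiniteDimensional ℝ V]
    (p : ℤ → Submodule ℝ V) (hp : DirectSum.IsInternal p)
    (B : V →ₗ[ℝ] V →ₗ[ℝ] ℝ)
    (L : Module.End ℝ V)
    (hdeg : ∀ i : ℤ, ∀ x ∈ p i, L x ∈ p (i + 2))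
    (hadj : ∀ x y : V, B (L x) y = B x (L y))
    (d : ℤ) (hd : 0 < d)
    (hshiftHL : ∀ i : ℕ,
      (∀ x ∈ p (-d - (i : ℤ)), (L ^ i) x = 0 → x = 0) ∧
      (∀ y ∈ p (-d + (i : ℤ)), ∃ x ∈ p (-d - (i : ℤ)), (L ^ i) x = y)) :
    ∀ i : ℕ, ∀ x ∈ p (-(i : ℤ)), ∀ y ∈ p (-(i : ℤ)), B x ((L ^ i) y) = 0 := by
  have hsurj := fun i => (hshiftHL i).2
  have hvanish := apply_eq_zero_of_mem_neg_sub_of_mem_add hdeg hadj hd hsurj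
    (exists_forall_lt_eq_bot_of_iSupIndep hp.submodule_iSupIndep)
  intro i x hx y hy
  have hLy : (L ^ i) y ∈ p i := by
    convert pow_apply_mem_add_two_mul hdeg i hy using 2
    ring
  rcases le_or_gt d i with hdi | hid
  · obtain ⟨j, hj⟩ : ∃ j : ℕ, (i : ℤ) = d + j := ⟨(i - d).toNat, by omega⟩
    exact hvanish j x (by convert hx using 2; omega) _ (by convert hLy using 2; omega)
  · obtain ⟨e, he⟩ : ∃ e : ℕ, (i : ℤ) + e = d := ⟨(d - i).toNat, by omega⟩
    obtain ⟨x', hx', rfl⟩ := hsurj e x (by convert hx using 2; omega)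
    rw [LinearMap.IsAdjointPair.pow hadj e]
    refine hvanish e x' hx' _ ?_
    convert pow_apply_mem_add_two_mul hdeg e hLy using 2
    omega

/-- **Vanishing of shifted Lefschetz forms.** Let `H` be a graded finite-dimensional real
vector space with a graded symmetric bilinear form `⟨-,-⟩` (not necessarily
non-degenerate) and a self-adjoint degree-2 operator `L`.  Suppose there is an integer
`d > 0` such that `L^i : H^{-d-i} → H^{-d+i}` is an isomorphism for all `i ≥ 0`.  Then for
all `i ≥ 0` the Lefschetz form `(h,h')_L^{-i} = ⟨h, L^i h'⟩` on `H^{-i}` is identically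
zero. -/
theorem shifted_lefschetz_form_vanishes
    (V : Type) [AddCommGroup V] [Module ℝ V] [FiniteDimensional ℝ V]
    (p : ℤ → Submodule ℝ V) (hp : DirectSum.IsInternal p)
    (B : V →ₗ[ℝ] V →ₗ[ℝ] ℝ)
    (hsymm : ∀ x y : V, B x y = B y x)
    (hgraded : ∀ i j : ℤ, i + j ≠ 0 → ∀ x ∈ p i, ∀ y ∈ p j, B x y = 0)
    (L : Module.End ℝ V)
    (hdeg : ∀ i : ℤ, ∀ x ∈ p i, L x ∈ p (i + 2))
    (hadj : ∀ x y : V, B (L x) y = B x (L y))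
    (d : ℤ) (hd : 0 < d)
    (hshiftHL : ∀ i : ℕ,
      (∀ x ∈ p (-d - (i : ℤ)), (L ^ i) x = 0 → x = 0) ∧
      (∀ y ∈ p (-d + (i : ℤ)), ∃ x ∈ p (-d - (i : ℤ)), (L ^ i) x = y)) :
    ∀ i : ℕ, ∀ x ∈ p (-(i : ℤ)), ∀ y ∈ p (-(i : ℤ)), B x ((L ^ i) y) = 0 :=
  shifted_lefschetz_form_vanishes_general V p hp B L hdeg hadj d hd hshiftHL
end

section
/- Let B be an R-bimodule with an invariant form ⟨-,-⟩_B, free of finite rank as a right R-module, with ⟨-,-⟩_B non-degenerate (inducing an isomorphism B ≅ 𝔻B). Then the induced form ⟨-,-⟩_{BB_s} on B ⊗_R B_s, determined by ⟨α(b),α(b')⟩ = ∂_s⟨b,b'⟩, ⟨α(b),β(b')⟩ = ⟨β(b),α(b')⟩ = ⟨b,b'⟩, ⟨β(b),β(b')⟩ = ⟨b,b'⟩α_s (where α(b) = b⊗c_id, β(b) = b⊗c_s), is non-degenerate. -/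
/-!
In the bases `α(bᵢ), β(bᵢ)` of `B B_s` the Gram matrix of the induced form is
`[[∂Φ, Φ], [Φ, α_s Φ]]`, where `Φ` is the Gram matrix of `⟨-,-⟩_B` and `∂Φ` is `∂_s` applied
entrywise. Multiplying on the right by `[[-α_s, 1], [1, 0]]` makes it block upper triangular with
diagonal blocks `Φ - α_s ∂Φ = s(Φ)` and `Φ`. Both have unit determinant because `Φ` does, so the
Gram matrix of the induced form has unit determinant as well.
-/

open Matrix

section GramMatrix

variable {R M M' ι : Type*} [CommRing R] [AddCommGroup M] [Module R M] [AddCommGroup M']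
  [Module R M'] [Fintype ι] [DecidableEq ι]

theorem LinearMap.bijective_iff_isUnit_det_toMatrix (f : M →ₗ[R] M') (v : Module.Basis ι R M)
    (v' : Module.Basis ι R M') :
    Function.Bijective f ↔ IsUnit (LinearMap.toMatrix v v' f).det :=
  ⟨fun hf => (LinearEquiv.ofBijective f hf).isUnit_det v v',
    fun h => LinearEquiv.coe_ofIsUnitDet h ▸ (LinearEquiv.ofIsUnitDet h).bijective⟩

theorem LinearMap.toMatrix_dualBasis_eq_transpose_toMatrix₂ (B : M →ₗ[R] M →ₗ[R] R)
    (b : Module.Basis ι R M) :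
    LinearMap.toMatrix b b.dualBasis B = (LinearMap.toMatrix₂ b b B)ᵀ := by
  ext i j
  simp [LinearMap.toMatrix_apply, LinearMap.toMatrix₂_apply]

theorem LinearMap.bijective_iff_isUnit_det_toMatrix₂ (B : M →ₗ[R] M →ₗ[R] R)
    (b : Module.Basis ι R M) :
    Function.Bijective B ↔ IsUnit (LinearMap.toMatrix₂ b b B).det := by
  rw [bijective_iff_isUnit_det_toMatrix B b b.dualBasis,
    toMatrix_dualBasis_eq_transpose_toMatrix₂, det_transpose]

end GramMatrix

namespace Matrix

variable {R n : Type*} [CommRing R] [Fintype n] [DecidableEq n]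

theorem fromBlocks_mul_fromBlocks_neg_smul_one (D Φ : Matrix n n R) (c : R) :
    fromBlocks D Φ Φ (c • Φ) * fromBlocks (-(c • 1)) 1 1 0 = fromBlocks (Φ - c • D) D 0 Φ := by
  rw [fromBlocks_multiply]
  congr 1 <;> simp only [mul_neg, Matrix.mul_smul, mul_one, mul_zero, add_zero] <;> abel

theorem isUnit_det_fromBlocks_smul {D Φ : Matrix n n R} {c : R} (hsub : IsUnit (Φ - c • D).det)
    (hΦ : IsUnit Φ.det) : IsUnit (fromBlocks D Φ Φ (c • Φ)).det := by
  have h := fromBlocks_mul_fromBlocks_neg_smul_one D Φ c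
  apply_fun det at h
  rw [det_mul, det_fromBlocks_zero₂₁] at h
  exact isUnit_of_mul_isUnit_left (h ▸ hsub.mul hΦ)

end Matrix

theorem induced_form_nondegenerate_general
    (R : Type) [CommRing R]
    (sact : R ≃+* R) (αs : R) (dem : R → R)
    (hdem : ∀ r : R, αs * dem r = r - sact r)
    -- `M` is the bimodule `B` (with its right `R`-module structure), free of finite rank:
    (M : Type) [AddCommGroup M] [Module R M]
    (ι : Type) [Fintype ι] (bM : Module.Basis ι R M)
    -- the non-degenerate invariant form on `B`:
    (F : M →ₗ[R] M →ₗ[R] R)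
    (hFnd : Function.Bijective F)
    -- `N` is the bimodule `B B_s` with its right `R`-module structure:
    (N : Type) [AddCommGroup N] [Module R N]
    -- `A = α` and `Bβ = β`:
    (A : M →+ N) (Bβ : M →ₗ[R] N)
    -- `N` is free on the images of the basis of `M` under `α` and `β`:
    (bN : Module.Basis (ι ⊕ ι) R N)
    (hbN : ∀ i : ι, bN (Sum.inl i) = A (bM i) ∧ bN (Sum.inr i) = Bβ (bM i))
    -- the induced form:
    (G : N →ₗ[R] N →ₗ[R] R)
    (hGAA : ∀ m m' : M, G (A m) (A m') = dem (F m m'))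
    (hGAB : ∀ m m' : M, G (A m) (Bβ m') = F m m')
    (hGBA : ∀ m m' : M, G (Bβ m) (A m') = F m m')
    (hGBB : ∀ m m' : M, G (Bβ m) (Bβ m') = F m m' * αs) :
    Function.Bijective G := by
  classical
  set Φ := LinearMap.toMatrix₂ bM bM F
  have hΦ : IsUnit Φ.det := (F.bijective_iff_isUnit_det_toMatrix₂ bM).mp hFnd
  have hGram : LinearMap.toMatrix₂ bN bN G = fromBlocks (Φ.map dem) Φ Φ (αs • Φ) := by
    ext (i | i) (j | j) <;>
      simp [Φ, LinearMap.toMatrix₂_apply, hbN, hGAA, hGAB, hGBA, hGBB, mul_comm]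
  have hdemΦ : Φ - αs • Φ.map dem = Φ.map sact := by
    ext i j
    simp [hdem]
  rw [G.bijective_iff_isUnit_det_toMatrix₂ bN, hGram]
  refine isUnit_det_fromBlocks_smul ?_ hΦ
  rw [hdemΦ]
  exact sact.map_det Φ ▸ hΦ.map sact

/-- **Non-degeneracy of the induced form on `B B_s`.**  Let `B` be an `R`-bimodule with
an invariant form `⟨-,-⟩_B`, free of finite rank as a right `R`-module, whose form is
non-degenerate (inducing an isomorphism `B ≅ 𝔻B` onto the right-module dual).  Then the
induced form on `B B_s = B ⊗_R B_s`, determined on the elements `α(b) = b ⊗ c_id` and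
`β(b) = b ⊗ c_s` by `⟨α(b),α(b')⟩ = ∂_s⟨b,b'⟩`, `⟨α(b),β(b')⟩ = ⟨β(b),α(b')⟩ = ⟨b,b'⟩`
and `⟨β(b),β(b')⟩ = ⟨b,b'⟩·α_s`, is non-degenerate.

Here `B B_s` is presented as the module `N`, which is free as a right `R`-module on the
images under `α` and `β` of a basis of `B`; the map `β` is right-`R`-linear while `α`
satisfies `α(r b) = (s r)·α(b) + ∂_s(r)·β(b)` for the right action. -/
theorem induced_form_nondegenerate
    (R : Type) [CommRing R]
    (sact : R ≃+* R) (αs : R) (dem : R → R)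
    (hdem : ∀ r : R, αs * dem r = r - sact r)
    (hreg : ∀ a : R, αs * a = 0 → a = 0)
    -- `M` is the bimodule `B` (with its right `R`-module structure), free of finite rank:
    (M : Type) [AddCommGroup M] [Module R M]
    (ι : Type) [Fintype ι] (bM : Module.Basis ι R M)
    -- the non-degenerate invariant form on `B`:
    (F : M →ₗ[R] M →ₗ[R] R)
    (hFnd : Function.Bijective F)
    -- `N` is the bimodule `B B_s` with its right `R`-module structure:
    (N : Type) [AddCommGroup N] [Module R N]
    -- `A = α` and `Bβ = β`:
    (A : M →+ N) (Bβ : M →ₗ[R] N)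
    (hA : ∀ (r : R) (m : M), A (r • m) = sact r • A m + dem r • Bβ m)
    -- `N` is free on the images of the basis of `M` under `α` and `β`:
    (bN : Module.Basis (ι ⊕ ι) R N)
    (hbN : ∀ i : ι, bN (Sum.inl i) = A (bM i) ∧ bN (Sum.inr i) = Bβ (bM i))
    -- the induced form:
    (G : N →ₗ[R] N →ₗ[R] R)
    (hGAA : ∀ m m' : M, G (A m) (A m') = dem (F m m'))
    (hGAB : ∀ m m' : M, G (A m) (Bβ m') = F m m')
    (hGBA : ∀ m m' : M, G (Bβ m) (A m') = F m m')
    (hGBB : ∀ m m' : M, G (Bβ m) (Bβ m') = F m m' * αs) :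
    Function.Bijective G :=
  induced_form_nondegenerate_general R sact αs dem hdem M ι bM F hFnd N A Bβ bN hbN G hGAA hGAB hGBA
    hGBB
end

section
/- Let zero be replaced as follows: suppose B is an ℝ-bimodule situation where xs < x, so B_x B_s ≅ B_x(1) ⊕ B_x(-1), and left multiplication by ρ on \overline{B_x} satisfies hard Lefschetz. Then for ζ > 0 the operator L_ζ on \overline{B_x B_s} = \overline{B_x}(1) ⊕ \overline{B_x}(-1), given in matrix form by diagonal entries ρ·(-) and lower-left entry the scalar ζρ(α_s^∨)·id : \overline{B_x}(1) → \overline{B_x}(-1), satisfies hard Lefschetz: L_ζ^i : (\overline{B_x B_s})^{-i} → (\overline{B_x B_s})^i is an isomorphism for all i ≥ 0. -/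
/-!
Writing `L = [[e, 0], [c, e]]`, one has `L^(n+1) (x, y) = (e^(n+1) x, e^(n+1) y + (n+1) c e^n x)`.
Injectivity in degree `-(n+1)`: applying `e` to the second component kills the cross term,
so hard Lefschetz for `e^(n+2)` forces `y = 0`, and then hard Lefschetz for `e^n` forces `x = 0`.
Surjectivity: write the first target component as `e^(n+2) z` and correct the second one by the
Lefschetz decomposition `w = e^(n+1) z' + e^n x'` of `V^n`, with `x'` primitive.
-/

open LinearMap

variable {K V : Type*} [Field K] [AddCommGroup V] [Module K V]

def IsHardLefschetz (p : ℤ → Submodule K V) (e : Module.End K V) : Prop :=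
  ∀ i : ℕ,
    (∀ x ∈ p (-(i : ℤ)), (e ^ i) x = 0 → x = 0) ∧
    (∀ y ∈ p (i : ℤ), ∃ x ∈ p (-(i : ℤ)), (e ^ i) x = y)

/-- The grading of `V(1) ⊕ V(-1)`. -/
def shiftSumGrading (p : ℤ → Submodule K V) (j : ℤ) : Submodule K (V × V) :=
  (p (j + 1)).prod (p (j - 1))

/-- The operator `[[e, 0], [c • id, e]]` on `V(1) ⊕ V(-1)`. -/
def deformedLefschetz (e : Module.End K V) (c : K) : Module.End K (V × V) :=
  LinearMap.prod (e ∘ₗ fst K V V) (c • fst K V V + e ∘ₗ snd K V V)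

@[simp]
lemma deformedLefschetz_apply (e : Module.End K V) (c : K) (x y : V) :
    deformedLefschetz e c (x, y) = (e x, c • x + e y) :=
  rfl

lemma deformedLefschetz_pow_succ_apply (e : Module.End K V) (c : K) (n : ℕ) (x y : V) :
    (deformedLefschetz e c ^ (n + 1)) (x, y) =
      ((e ^ (n + 1)) x, (e ^ (n + 1)) y + (((n : K) + 1) * c) • (e ^ n) x) := by
  induction n generalizing x y with
  | zero => simp [add_comm]
  | succ m ih =>
    rw [pow_succ', Module.End.mul_apply, ih, deformedLefschetz_apply]
    simp only [map_add, map_smul, ← Module.End.mul_apply, ← pow_succ']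
    push_cast
    ext <;> module

section Graded

variable {p : ℤ → Submodule K V} {e : Module.End K V}

lemma pow_apply_mem (hdeg : ∀ i : ℤ, ∀ x ∈ p i, e x ∈ p (i + 2)) (k : ℕ) {j : ℤ} {x : V}
    (hx : x ∈ p j) : (e ^ k) x ∈ p (j + 2 * k) := by
  induction k with
  | zero => simpa using hx
  | succ n ih =>
    rw [pow_succ', Module.End.mul_apply]
    convert hdeg _ _ ih using 2
    push_cast
    ring

namespace IsHardLefschetz

variable (hHL : IsHardLefschetz p e)
include hHL

lemma eq_zero_of_pow_apply_eq_zero {n : ℕ} {m : ℤ} (hm : m = -n) {x : V} (hx : x ∈ p m)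
    (h : (e ^ n) x = 0) : x = 0 :=
  (hHL n).1 x (hm ▸ hx) h

lemma exists_pow_apply_eq {n : ℕ} {m : ℤ} (hm : m = n) {y : V} (hy : y ∈ p m) :
    ∃ x ∈ p (-m), (e ^ n) x = y :=
  hm ▸ (hHL n).2 y (hm ▸ hy)

/-- One step of the Lefschetz decomposition: `V^n = e^(n+1) V^(-n-2) + e^n P^(-n)`,
where `P^(-n)` is the primitive part. -/
lemma exists_decomposition (hdeg : ∀ i : ℤ, ∀ x ∈ p i, e x ∈ p (i + 2)) {n : ℕ} {w : V}
    (hw : w ∈ p n) :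
    ∃ z ∈ p (-(n + 2 : ℤ)), ∃ x ∈ p (-(n : ℤ)),
      (e ^ (n + 1)) x = 0 ∧ (e ^ (n + 1)) z + (e ^ n) x = w := by
  obtain ⟨z, hz, hez⟩ := hHL.exists_pow_apply_eq (n := n + 2) (by push_cast; ring) (hdeg _ _ hw)
  have hzw : (e ^ (n + 1)) z ∈ p n := by
    convert pow_apply_mem hdeg (n + 1) hz using 2
    push_cast
    ring
  obtain ⟨x, hx, hex⟩ := hHL.exists_pow_apply_eq rfl (sub_mem hw hzw)
  refine ⟨z, hz, x, hx, ?_, by rw [hex, add_sub_cancel]⟩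
  rw [pow_succ', Module.End.mul_apply, hex, map_sub, ← Module.End.mul_apply, ← pow_succ',
    hez, sub_self]

lemma deformedLefschetz_pow_succ_eq_zero {c : K} (hc : c ≠ 0) [CharZero K] {n : ℕ} {x y : V}
    (hx : x ∈ p (-n)) (hy : y ∈ p (-(n + 2 : ℤ)))
    (h : (deformedLefschetz e c ^ (n + 1)) (x, y) = 0) : (x, y) = 0 := by
  rw [deformedLefschetz_pow_succ_apply, Prod.mk_eq_zero] at h
  obtain ⟨hx₁, hxy⟩ := h
  have hy₁ : (e ^ (n + 2)) y = 0 := by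
    simpa [hx₁, ← Module.End.mul_apply, ← pow_succ'] using congrArg e hxy
  obtain rfl : y = 0 := hHL.eq_zero_of_pow_apply_eq_zero (by push_cast; ring) hy hy₁
  have hk : ((n : K) + 1) * c ≠ 0 := mul_ne_zero (Nat.cast_add_one_ne_zero n) hc
  rw [map_zero, zero_add, smul_eq_zero] at hxy
  obtain rfl : x = 0 := hHL.eq_zero_of_pow_apply_eq_zero rfl hx (hxy.resolve_left hk)
  rfl

variable (hdeg : ∀ i : ℤ, ∀ x ∈ p i, e x ∈ p (i + 2))
include hdeg

lemma exists_deformedLefschetz_pow_succ_apply_eq {c : K} (hc : c ≠ 0) [CharZero K] {n : ℕ}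
    {u v : V} (hu : u ∈ p (n + 2)) (hv : v ∈ p n) :
    ∃ x ∈ p (-n), ∃ y ∈ p (-(n + 2 : ℤ)), (deformedLefschetz e c ^ (n + 1)) (x, y) = (u, v) := by
  set k : K := ((n : K) + 1) * c with hk_def
  have hk : k ≠ 0 := mul_ne_zero (Nat.cast_add_one_ne_zero n) hc
  obtain ⟨z, hz, rfl⟩ := hHL.exists_pow_apply_eq (n := n + 2) (by push_cast; ring) hu
  have hez : e z ∈ p (-n) := by convert hdeg _ _ hz using 2; ring
  have hez' : (e ^ (n + 1)) z ∈ p n := by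
    convert pow_apply_mem hdeg (n + 1) hz using 2
    push_cast
    ring
  obtain ⟨y, hy, x, hx, hprim, hdec⟩ :=
    hHL.exists_decomposition hdeg (sub_mem hv (Submodule.smul_mem _ k hez'))
  refine ⟨e z + k⁻¹ • x, add_mem hez (Submodule.smul_mem _ _ hx), y, hy, ?_⟩
  rw [deformedLefschetz_pow_succ_apply, ← hk_def]
  simp only [map_add, map_smul, hprim, smul_zero, add_zero, ← Module.End.mul_apply, ← pow_succ,
    smul_add, smul_smul, mul_inv_cancel₀ hk, one_smul]
  refine Prod.ext rfl ?_
  dsimp only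
  rw [← add_assoc, add_right_comm, hdec, sub_add_cancel]

theorem deformedLefschetz {c : K} (hc : c ≠ 0) [CharZero K] :
    IsHardLefschetz (shiftSumGrading p) (deformedLefschetz e c) := by
  intro i
  cases i with
  | zero => simp
  | succ n =>
    have hneg : shiftSumGrading p (-((n + 1 : ℕ) : ℤ)) = (p (-n)).prod (p (-(n + 2 : ℤ))) := by
      rw [shiftSumGrading]; congr 2; push_cast; ring
    have hpos : shiftSumGrading p ((n + 1 : ℕ) : ℤ) = (p (n + 2)).prod (p n) := by
      rw [shiftSumGrading]; congr 2; push_cast; ring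
    rw [hneg, hpos]
    refine ⟨fun ⟨x, y⟩ ⟨hx, hy⟩ h ↦ hHL.deformedLefschetz_pow_succ_eq_zero hc hx hy h,
      fun ⟨u, v⟩ ⟨hu, hv⟩ ↦ ?_⟩
    obtain ⟨x, hx, y, hy, h⟩ :=
      hHL.exists_deformedLefschetz_pow_succ_apply_eq hdeg hc hu hv
    exact ⟨(x, y), ⟨hx, hy⟩, h⟩

end IsHardLefschetz

end Graded

theorem hard_lefschetz_deformed_descent_general
    (V : Type) [AddCommGroup V] [Module ℝ V]
    (p : ℤ → Submodule ℝ V)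
    (e : Module.End ℝ V)
    (hdeg : ∀ i : ℤ, ∀ x ∈ p i, e x ∈ p (i + 2))
    (hHL : ∀ i : ℕ,
      (∀ x ∈ p (-(i : ℤ)), (e ^ i) x = 0 → x = 0) ∧
      (∀ y ∈ p (i : ℤ), ∃ x ∈ p (-(i : ℤ)), (e ^ i) x = y))
    (c : ℝ) (hc : 0 < c) :
    ∀ i : ℕ,
      (∀ x ∈ ((p (-(i : ℤ) + 1)).prod (p (-(i : ℤ) - 1)) : Submodule ℝ (V × V)),
        ((LinearMap.prod (e ∘ₗ LinearMap.fst ℝ V V)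
            (c • LinearMap.fst ℝ V V + e ∘ₗ LinearMap.snd ℝ V V) ^ i)) x = 0 → x = 0) ∧
      (∀ y ∈ ((p ((i : ℤ) + 1)).prod (p ((i : ℤ) - 1)) : Submodule ℝ (V × V)),
        ∃ x ∈ ((p (-(i : ℤ) + 1)).prod (p (-(i : ℤ) - 1)) : Submodule ℝ (V × V)),
          ((LinearMap.prod (e ∘ₗ LinearMap.fst ℝ V V)
            (c • LinearMap.fst ℝ V V + e ∘ₗ LinearMap.snd ℝ V V) ^ i)) x = y) :=
  IsHardLefschetz.deformedLefschetz hHL hdeg hc.ne'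

/-- **Hard Lefschetz for `L_ζ` when `xs < x` (abstract form).**  Let `V` be a graded
finite-dimensional real vector space with a degree-2 operator `e` satisfying hard
Lefschetz.  Form `V(1) ⊕ V(-1)` (so the degree-`i` piece is `V^{i+1} × V^{i-1}`) and the
operator `L = [[e, 0], [c·id, e]]` with `c > 0`.  Then
`L^i : (V(1) ⊕ V(-1))^{-i} → (V(1) ⊕ V(-1))^i` is an isomorphism for all `i ≥ 0`.
(This is the statement that for `ζ > 0` and `xs < x`, the operator `L_ζ` on
`\overline{B_x B_s} ≅ \overline{B_x}(1) ⊕ \overline{B_x}(-1)`, with diagonal entries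
left multiplication by `ρ` and lower-left entry the scalar `ζ ρ(α_s^∨)`, satisfies hard
Lefschetz, given that left multiplication by `ρ` satisfies hard Lefschetz on
`\overline{B_x}`.) -/
theorem hard_lefschetz_deformed_descent
    (V : Type) [AddCommGroup V] [Module ℝ V] [FiniteDimensional ℝ V]
    (p : ℤ → Submodule ℝ V) (hp : DirectSum.IsInternal p)
    (e : Module.End ℝ V)
    (hdeg : ∀ i : ℤ, ∀ x ∈ p i, e x ∈ p (i + 2))
    (hHL : ∀ i : ℕ,
      (∀ x ∈ p (-(i : ℤ)), (e ^ i) x = 0 → x = 0) ∧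
      (∀ y ∈ p (i : ℤ), ∃ x ∈ p (-(i : ℤ)), (e ^ i) x = y))
    (c : ℝ) (hc : 0 < c) :
    ∀ i : ℕ,
      (∀ x ∈ ((p (-(i : ℤ) + 1)).prod (p (-(i : ℤ) - 1)) : Submodule ℝ (V × V)),
        ((LinearMap.prod (e ∘ₗ LinearMap.fst ℝ V V)
            (c • LinearMap.fst ℝ V V + e ∘ₗ LinearMap.snd ℝ V V) ^ i)) x = 0 → x = 0) ∧
      (∀ y ∈ ((p ((i : ℤ) + 1)).prod (p ((i : ℤ) - 1)) : Submodule ℝ (V × V)),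
        ∃ x ∈ ((p (-(i : ℤ) + 1)).prod (p (-(i : ℤ) - 1)) : Submodule ℝ (V × V)),
          ((LinearMap.prod (e ∘ₗ LinearMap.fst ℝ V V)
            (c • LinearMap.fst ℝ V V + e ∘ₗ LinearMap.snd ℝ V V) ^ i)) x = y) :=
  hard_lefschetz_deformed_descent_general V p e hdeg hHL c hc
end

section
/- Consider the block symmetric matrix M = [[A, J, B],[Jᵀ, 0, 0],[Bᵀ, 0, Q]] over ℝ, where J is a non-degenerate (square) matrix and Q is symmetric. Then M is non-degenerate if and only if Q is non-degenerate, and in that case the signature of M equals the signature of Q. -/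
open Matrix
/-- The maximal dimension of a subspace on which the quadratic form of `M` is positive. -/
noncomputable def matPosIndex {ι : Type} [Fintype ι] (M : Matrix ι ι ℝ) : ℕ :=
  sSup {d : ℕ | ∃ T : Submodule ℝ (ι → ℝ), Module.finrank ℝ T = d ∧
    ∀ x ∈ T, x ≠ 0 → 0 < x ⬝ᵥ M.mulVec x}

/-- The maximal dimension of a subspace on which the quadratic form of `M` is negative. -/
noncomputable def matNegIndex {ι : Type} [Fintype ι] (M : Matrix ι ι ℝ) : ℕ :=
  sSup {d : ℕ | ∃ T : Submodule ℝ (ι → ℝ), Module.finrank ℝ T = d ∧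
    ∀ x ∈ T, x ≠ 0 → x ⬝ᵥ M.mulVec x < 0}

/-- The signature of a symmetric real matrix: the number of positive eigenvalues minus
the number of negative eigenvalues. -/
noncomputable def matSignature {ι : Type} [Fintype ι] (M : Matrix ι ι ℝ) : ℤ :=
  (matPosIndex M : ℤ) - (matNegIndex M : ℤ)

/-!
Write the quadratic form of `M` as `xᵀAx + 2xᵀJy + 2xᵀBz + zᵀQz`. The substitution
`y ↦ y - J⁻¹(Ax/2 + Bz)` removes `A` and `B`, and then `x = u + v`, `y = J⁻¹(u - v)` turns the
hyperbolic term `2xᵀJy` into `2|u|² - 2|v|²`. So `M` is congruent to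
`diag(2·1, -2·1, UᵀQU)` for every invertible `U`; choosing `U` orthogonal with `UᵀQU` diagonal,
Sylvester's law of inertia shows that the hyperbolic part adds `n` positive and `n` negative
squares to those of `Q`, and its determinant `2ⁿ(-2)ⁿ` is non-zero.
-/

open QuadraticMap

lemma Set.ncard_setOf_sumElim {α β γ : Type*} [Finite α] [Finite β] (p : γ → Prop)
    (f : α → γ) (g : β → γ) :
    {i | p (Sum.elim f g i)}.ncard = {a | p (f a)}.ncard + {b | p (g b)}.ncard := by
  simp only [← Nat.card_coe_set_eq, Set.coe_ofPred]
  rw [Nat.card_congr Equiv.subtypeSum, Nat.card_sum]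
  rfl

namespace Matrix

section BlockAdd

variable {R : Type*} [Add R] {m n₁ n₂ : Type*}

lemma fromCols_add_fromCols (A₁ B₁ : Matrix m n₁ R) (A₂ B₂ : Matrix m n₂ R) :
    fromCols A₁ A₂ + fromCols B₁ B₂ = fromCols (A₁ + B₁) (A₂ + B₂) := by
  ext i (j | j) <;> rfl

lemma fromRows_add_fromRows (A₁ B₁ : Matrix n₁ m R) (A₂ B₂ : Matrix n₂ m R) :
    fromRows A₁ A₂ + fromRows B₁ B₂ = fromRows (A₁ + B₁) (A₂ + B₂) := by
  ext (i | i) j <;> rfl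

end BlockAdd

section Congruence

variable {R : Type*} [CommRing R] {ι : Type*} [Fintype ι] [DecidableEq ι]

lemma det_transpose_mul_mul_ne_zero_iff (M : Matrix ι ι R) {P : Matrix ι ι R}
    (hP : IsUnit P.det) : (Pᵀ * M * P).det ≠ 0 ↔ M.det ≠ 0 := by
  simp only [det_mul, det_transpose, ne_eq, hP.mul_left_eq_zero, hP.mul_right_eq_zero]

lemma toQuadraticForm'_apply (M : Matrix ι ι R) (x : ι → R) :
    M.toQuadraticForm' x = x ⬝ᵥ M *ᵥ x := by
  simp [toQuadraticForm', toLinearMap₂'_apply']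

lemma toQuadraticForm'_transpose_mul_mul_equivalent (M : Matrix ι ι R) {P : Matrix ι ι R}
    (hP : IsUnit P.det) :
    (Pᵀ * M * P).toQuadraticForm'.Equivalent M.toQuadraticForm' := by
  let _ : Invertible P := P.invertibleOfIsUnitDet hP
  have h : (Pᵀ * M * P).toQuadraticForm' =
      M.toQuadraticForm'.comp (P.toLinearEquiv' ‹_› : (ι → R) →ₗ[R] ι → R) := by
    ext x
    simp [toQuadraticForm'_apply, ← mulVec_mulVec, dotProduct_mulVec, vecMul_transpose]
  rw [h]
  exact ⟨(M.toQuadraticForm'.isometryEquivOfCompLinearEquiv _).symm⟩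

lemma toQuadraticForm'_diagonal (w : ι → R) :
    (diagonal w).toQuadraticForm' = weightedSumSquares R w := by
  ext x
  simp [toQuadraticForm'_apply, dotProduct, mulVec_diagonal, mul_left_comm]

lemma posDef_restrict_toQuadraticForm'_iff [PartialOrder R] (M : Matrix ι ι R)
    (T : Submodule R (ι → R)) :
    (M.toQuadraticForm'.restrict T).PosDef ↔ ∀ x ∈ T, x ≠ 0 → 0 < x ⬝ᵥ M *ᵥ x := by
  simp [QuadraticMap.PosDef, toQuadraticForm'_apply]

end Congruence

lemma IsSymm.exists_isUnit_det_transpose_mul_mul_eq_diagonal {k : Type*} [Fintype k]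
    [DecidableEq k] {Q : Matrix k k ℝ} (hQ : Q.IsSymm) :
    ∃ U : Matrix k k ℝ, IsUnit U.det ∧ ∃ ev : k → ℝ, Uᵀ * Q * U = diagonal ev := by
  have hQh : Q.IsHermitian := by simpa [IsHermitian] using hQ.eq
  refine ⟨hQh.eigenvectorUnitary, UnitaryGroup.det_isUnit _, hQh.eigenvalues, ?_⟩
  simpa [Unitary.conjStarAlgAut_star_apply, star_eq_conjTranspose] using
    hQh.conjStarAlgAut_star_eigenvectorUnitary

section Bordered

variable {K : Type*} [Field K] {n k : Type*} [Fintype n] [Fintype k] [DecidableEq n]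
  [DecidableEq k]

def borderedMatrix (A J : Matrix n n K) (B : Matrix n k K) (Q : Matrix k k K) :
    Matrix (n ⊕ (n ⊕ k)) (n ⊕ (n ⊕ k)) K :=
  fromBlocks A (fromCols J B) (fromRows Jᵀ Bᵀ) (fromBlocks 0 0 0 Q)

lemma exists_transpose_mul_borderedMatrix_zero_mul_eq [NeZero (2 : K)] {A J : Matrix n n K}
    (hA : A.IsSymm) (hJ : IsUnit J.det) (B : Matrix n k K) (Q : Matrix k k K) :
    ∃ P : Matrix (n ⊕ (n ⊕ k)) (n ⊕ (n ⊕ k)) K, IsUnit P.det ∧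
      Pᵀ * borderedMatrix 0 J 0 Q * P = borderedMatrix A J B Q := by
  set C := J⁻¹ * ((2⁻¹ : K) • A)
  set D := J⁻¹ * B
  have hJC : J * C = (2⁻¹ : K) • A := by
    rw [← Matrix.mul_assoc, mul_nonsing_inv _ hJ, Matrix.one_mul]
  have hJD : J * D = B := by rw [← Matrix.mul_assoc, mul_nonsing_inv _ hJ, Matrix.one_mul]
  have hCJ : Cᵀ * Jᵀ = (2⁻¹ : K) • A := by rw [← transpose_mul, hJC, transpose_smul, hA.eq]
  have hDJ : Dᵀ * Jᵀ = Bᵀ := by rw [← transpose_mul, hJD]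
  -- the substitution `(x, y, z) ↦ (x, y + Cx + Dz, z)`
  refine ⟨fromBlocks 1 0 (fromRows C 0) (fromBlocks 1 D 0 1), by simp [det_fromBlocks_zero₁₂], ?_⟩
  simp only [borderedMatrix, fromBlocks_transpose, transpose_fromRows, transpose_one,
    transpose_zero, fromBlocks_multiply, fromCols_mul_fromRows, fromCols_mul_fromBlocks,
    fromBlocks_mul_fromRows, Matrix.mul_one, Matrix.one_mul, Matrix.mul_zero, Matrix.zero_mul,
    add_zero, zero_add, hJC, hJD, hCJ, hDJ, fromRows_zero, fromCols_zero]
  rw [← add_smul, ← two_mul (2⁻¹ : K), mul_inv_cancel₀ two_ne_zero, one_smul]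

lemma exists_transpose_mul_borderedMatrix_zero_mul_eq_fromBlocks_diagonal [NeZero (2 : K)]
    {J : Matrix n n K} (hJ : IsUnit J.det) (Q : Matrix k k K) {U : Matrix k k K}
    (hU : IsUnit U.det) :
    ∃ G : Matrix (n ⊕ (n ⊕ k)) (n ⊕ (n ⊕ k)) K, IsUnit G.det ∧
      Gᵀ * borderedMatrix 0 J 0 Q * G =
        fromBlocks (diagonal fun _ ↦ 2) 0 0
          (fromBlocks (diagonal fun _ ↦ -2) 0 0 (Uᵀ * Q * U)) := by
  have hJJ : J * J⁻¹ = 1 := mul_nonsing_inv _ hJ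
  have hJJ' : (J⁻¹)ᵀ * Jᵀ = 1 := by rw [← transpose_mul, hJJ, transpose_one]
  -- the substitution `(u, v, z) ↦ (u + v, J⁻¹(u - v), Uz)`
  refine ⟨fromBlocks 1 (fromCols 1 0) (fromRows J⁻¹ 0) (fromBlocks (-J⁻¹) 0 0 U), ?_, ?_⟩
  · rw [det_fromBlocks_one₁₁]
    convert (show IsUnit (fromBlocks ((-2 : K) • J⁻¹) 0 0 U).det from ?_) using 2
    · rw [fromRows_mul_fromCols]
      ext (i | i) (j | j) <;> simp [two_mul, sub_eq_add_neg]
    rw [det_fromBlocks_zero₂₁, det_smul]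
    exact (IsUnit.mul (by simp [two_ne_zero]) (isUnit_nonsing_inv_det J hJ)).mul hU
  · simp only [borderedMatrix, fromBlocks_transpose, transpose_fromRows, transpose_fromCols,
      transpose_one, transpose_zero, transpose_neg, fromBlocks_multiply, fromCols_mul_fromRows,
      fromRows_mul_fromCols, fromCols_mul_fromBlocks, fromBlocks_mul_fromRows, Matrix.mul_one,
      Matrix.one_mul, Matrix.mul_zero, Matrix.zero_mul, Matrix.mul_neg, Matrix.neg_mul, add_zero,
      zero_add, fromCols_zero, fromRows_zero, neg_zero, hJJ, hJJ', Matrix.mul_assoc,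
      fromBlocks_add, fromCols_add_fromCols, fromRows_add_fromRows, neg_add_cancel,
      add_neg_cancel]
    rw [← diagonal_one, diagonal_neg, diagonal_add, diagonal_add]
    norm_num

end Bordered

end Matrix

section Signature

variable {ι : Type} [Fintype ι] [DecidableEq ι]

lemma matPosIndex_eq_sigPos (M : Matrix ι ι ℝ) : matPosIndex M = sigPos M.toQuadraticForm' :=
  IsGreatest.csSup_eq <| by
    simpa only [Matrix.posDef_restrict_toQuadraticForm'_iff] using
      sigPos_isGreatest M.toQuadraticForm'

lemma matNegIndex_eq_sigNeg (M : Matrix ι ι ℝ) : matNegIndex M = sigNeg M.toQuadraticForm' := by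
  have h : -M.toQuadraticForm' = (-M).toQuadraticForm' := by
    ext x
    simp [Matrix.toQuadraticForm'_apply, neg_mulVec]
  refine IsGreatest.csSup_eq ?_
  simpa [h, Matrix.posDef_restrict_toQuadraticForm'_iff, neg_mulVec] using
    sigNeg_isGreatest M.toQuadraticForm'

lemma matSignature_eq_of_equivalent_weightedSumSquares {M : Matrix ι ι ℝ} {κ : Type*}
    [Fintype κ] {w : κ → ℝ} (h : M.toQuadraticForm'.Equivalent (weightedSumSquares ℝ w)) :
    matSignature M = {i | 0 < w i}.ncard - {i | w i < 0}.ncard := by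
  rw [matSignature, matPosIndex_eq_sigPos, matNegIndex_eq_sigNeg,
    QuadraticForm.sigPos_of_equiv_weightedSumSquares h,
    QuadraticForm.sigNeg_of_equiv_weightedSumSquares h]

end Signature

/-- **Block-matrix signature lemma.**  Consider the symmetric block matrix
`M = [[A, J, B], [Jᵀ, 0, 0], [Bᵀ, 0, Q]]` over `ℝ` with `J` invertible and `A`, `Q`
symmetric.  Then `M` is non-degenerate iff `Q` is, and in that case the signature of `M`
equals the signature of `Q`. -/
theorem block_matrix_signature
    {n k : Type} [Fintype n] [Fintype k] [DecidableEq n] [DecidableEq k]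
    (A : Matrix n n ℝ) (hA : A.IsSymm)
    (J : Matrix n n ℝ) (hJ : IsUnit J.det)
    (Bm : Matrix n k ℝ)
    (Q : Matrix k k ℝ) (hQ : Q.IsSymm) :
    ((Matrix.fromBlocks A (Matrix.fromCols J Bm)
        (Matrix.fromRows Jᵀ Bmᵀ) (Matrix.fromBlocks 0 0 0 Q)).det ≠ 0 ↔ Q.det ≠ 0) ∧
    (Q.det ≠ 0 →
      matSignature (Matrix.fromBlocks A (Matrix.fromCols J Bm)
        (Matrix.fromRows Jᵀ Bmᵀ) (Matrix.fromBlocks 0 0 0 Q)) = matSignature Q) := by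
  show ((borderedMatrix A J Bm Q).det ≠ 0 ↔ Q.det ≠ 0) ∧
    (Q.det ≠ 0 → matSignature (borderedMatrix A J Bm Q) = matSignature Q)
  obtain ⟨P, hP, hPN⟩ := exists_transpose_mul_borderedMatrix_zero_mul_eq hA hJ Bm Q
  obtain ⟨U, hU, ev, hUQ⟩ := hQ.exists_isUnit_det_transpose_mul_mul_eq_diagonal
  obtain ⟨G, hG, hGN⟩ := exists_transpose_mul_borderedMatrix_zero_mul_eq_fromBlocks_diagonal hJ Q hU
  rw [hUQ, fromBlocks_diagonal, fromBlocks_diagonal] at hGN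
  refine ⟨?_, fun _ ↦ ?_⟩
  · rw [← hPN, det_transpose_mul_mul_ne_zero_iff _ hP,
      ← det_transpose_mul_mul_ne_zero_iff (borderedMatrix 0 J 0 Q) hG, hGN,
      ← det_transpose_mul_mul_ne_zero_iff Q hU, hUQ]
    simp [det_diagonal, Finset.prod_ne_zero_iff]
  · have hM : (borderedMatrix A J Bm Q).toQuadraticForm'.Equivalent
        (weightedSumSquares ℝ (Sum.elim (fun _ : n ↦ (2 : ℝ)) (Sum.elim (fun _ : n ↦ -2) ev))) := by
      rw [← hPN, ← toQuadraticForm'_diagonal, ← hGN]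
      exact (toQuadraticForm'_transpose_mul_mul_equivalent _ hP).trans
        (toQuadraticForm'_transpose_mul_mul_equivalent _ hG).symm
    have hQw : Q.toQuadraticForm'.Equivalent (weightedSumSquares ℝ ev) := by
      rw [← toQuadraticForm'_diagonal, ← hUQ]
      exact (toQuadraticForm'_transpose_mul_mul_equivalent Q hU).symm
    rw [matSignature_eq_of_equivalent_weightedSumSquares hM,
      matSignature_eq_of_equivalent_weightedSumSquares hQw]
    simp only [Set.ncard_setOf_sumElim (fun x : ℝ ↦ 0 < x),
      Set.ncard_setOf_sumElim (fun x : ℝ ↦ x < 0), Left.neg_pos_iff, Left.neg_neg_iff,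
      Nat.ofNat_pos, Set.ofPred_true, Set.ncard_univ, Nat.cast_add]
    ring
end
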